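/- Let S and A be types, γ ∈ (0,1), δ > 0, ε ≥ 0. Let Q : S × A → ℝ, r : S × A → ℝ, V : S → ℝ, f : S × A → S satisfy Q(s,a) = r(s,a) + γ·V(f(s,a)) for all s, a, and suppose V is δ-separable, i.e. |V(s) − V(x)| > δ for all s ≠ x. Let Q̂ : S × A → ℝ and V̂ : S → ℝ satisfy |Q̂(s,a) − Q(s,a)| ≤ ε for all s, a and |V̂(x) − V(x)| ≤ ε for all x. Then for every s ∈ S, a ∈ A, and every x ∈ S with x ≠ f(s,a), we have |V̂(x) − (Q̂(s,a) − r(s,a))/γ| > δ − ε − ε/γ. -/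

import Mathlib

theorem lt_abs_sub_of_lt_abs_sub_of_abs_sub_le {u v a b δ ε η : ℝ} (hsep : δ < |u - v|)
    (ha : |a - u| ≤ ε) (hb : |b - v| ≤ η) : δ - ε - η < |a - b| := by
  have hu : |u - v| ≤ |u - a| + |a - b| + |b - v| :=
    calc |u - v| ≤ |u - a| + |a - v| := abs_sub_le u a v
      _ ≤ |u - a| + (|a - b| + |b - v|) := by gcongr; exact abs_sub_le a b v
      _ = _ := by ring
  rw [abs_sub_comm u a] at hu
  linarith

theorem abs_div_sub_le_of_eq_add_mul {q qhat r v γ ε : ℝ} (hγ : 0 < γ) (hq : q = r + γ * v)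
    (hqhat : |qhat - q| ≤ ε) : |(qhat - r) / γ - v| ≤ ε / γ := by
  have hscan : (qhat - r) / γ - v = (qhat - q) / γ := by
    rw [hq]
    field_simp
    ring
  rw [hscan, abs_div, abs_of_pos hγ]
  gcongr

theorem stmt_9_general {S A : Type*} (γ δ ε : ℝ)
    (hγ0 : 0 < γ)
    (Q r : S × A → ℝ) (V : S → ℝ) (f : S × A → S)
    (hbell : ∀ s a, Q (s, a) = r (s, a) + γ * V (f (s, a)))
    (hsep : ∀ s x : S, s ≠ x → δ < |V s - V x|)
    (Qhat : S × A → ℝ) (Vhat : S → ℝ)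
    (hQ : ∀ s a, |Qhat (s, a) - Q (s, a)| ≤ ε)
    (hVe : ∀ x, |Vhat x - V x| ≤ ε) :
    ∀ (s : S) (a : A) (x : S), x ≠ f (s, a) →
      δ - ε - ε / γ < |Vhat x - (Qhat (s, a) - r (s, a)) / γ| :=
  fun s a x hx => lt_abs_sub_of_lt_abs_sub_of_abs_sub_le (hsep x (f (s, a)) hx) (hVe x)
    (abs_div_sub_le_of_eq_add_mul hγ0 (hbell s a) (hQ s a))

/-- Intermediate claim in the proof of Theorem 2: every state other than the true
successor has estimated value bounded away from the scanned value by `δ - ε - ε / γ`. -/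
theorem stmt_9 {S A : Type*} (γ δ ε : ℝ)
    (hγ0 : 0 < γ) (hγ1 : γ < 1) (hδ : 0 < δ) (hε : 0 ≤ ε)
    (Q r : S × A → ℝ) (V : S → ℝ) (f : S × A → S)
    (hbell : ∀ s a, Q (s, a) = r (s, a) + γ * V (f (s, a)))
    (hsep : ∀ s x : S, s ≠ x → δ < |V s - V x|)
    (Qhat : S × A → ℝ) (Vhat : S → ℝ)
    (hQ : ∀ s a, |Qhat (s, a) - Q (s, a)| ≤ ε)
    (hVe : ∀ x, |Vhat x - V x| ≤ ε) :
    ∀ (s : S) (a : A) (x : S), x ≠ f (s, a) →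
      δ - ε - ε / γ < |Vhat x - (Qhat (s, a) - r (s, a)) / γ| :=
  stmt_9_general γ δ ε hγ0 Q r V f hbell hsep Qhat Vhat hQ hVe
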